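/- Let 𝒟 be a dyadic grid on ℝⁿ, let α ∈ (0,1], γ = α/(2(2n+α)), and fix an integer r ≥ 1. Let I, J ∈ 𝒟 and let K ∈ 𝒟 be good, with ℓ(K) ≤ ℓ(I) = 2ℓ(J) ≤ 2^r ℓ(K) and max(d(K,I), d(K,J)) ≤ ℓ(K)^γ ℓ(J)^{1−γ}. Then the r-th dyadic ancestor Q = K^{(r)} satisfies I ∪ J ∪ K ⊂ Q and ℓ(Q) = 2^r ℓ(K). -/

import Mathlib

open MeasureTheory Set
open scoped ENNReal NNReal Classical

noncomputable section

namespace Bilinear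

/-- Points of `ℝⁿ`, equipped with the `ℓ^∞` (sup) metric. -/
abbrev E (n : ℕ) : Type := Fin n → ℝ

/-- An axis-parallel cube in `ℝⁿ`, described by its lower corner and its side length. -/
structure Cube (n : ℕ) where
  corner : Fin n → ℝ
  side : ℝ
  side_pos : 0 < side

namespace Cube

variable {n : ℕ}

/-- The (half-open) cube as a subset of `ℝⁿ`. -/
def set (Q : Cube n) : Set (E n) :=
  {x | ∀ i, Q.corner i ≤ x i ∧ x i < Q.corner i + Q.side}

/-- The closed cube as a subset of `ℝⁿ`. -/
def clSet (Q : Cube n) : Set (E n) :=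
  {x | ∀ i, Q.corner i ≤ x i ∧ x i ≤ Q.corner i + Q.side}

/-- The volume `|Q| = ℓ(Q)ⁿ` of a cube. -/
def vol (Q : Cube n) : ℝ := Q.side ^ n

/-- The center of a cube. -/
def center (Q : Cube n) : E n := fun i => Q.corner i + Q.side / 2

/-- The concentric dilate `cQ` of a cube (defined for `c ≥ 1`; junk otherwise). -/
def dilate (Q : Cube n) (c : ℝ) : Cube n where
  corner := fun i => Q.corner i + Q.side / 2 - max c 1 * Q.side / 2
  side := max c 1 * Q.side
  side_pos := mul_pos (lt_of_lt_of_le one_pos (le_max_right c 1)) Q.side_pos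

end Cube

/-- The (`ℓ^∞`) distance between two sets of `ℝⁿ`. -/
def setDist {n : ℕ} (s t : Set (E n)) : ℝ := sInf (Set.image2 dist s t)

/-- The (`ℓ^∞`) distance between two cubes. -/
def cubeDist {n : ℕ} (Q R : Cube n) : ℝ := setDist Q.clSet R.clSet

/-- The indicator function `1_Q` of a cube, as a complex-valued function. -/
def indC {n : ℕ} (Q : Cube n) : E n → ℂ := fun x => if x ∈ Q.set then 1 else 0

/-- The average `⟨|f|⟩_Q` of `|f|` over a cube. -/
def avgAbs {n : ℕ} (Q : Cube n) (f : E n → ℂ) : ℝ := Q.vol⁻¹ * ∫ x in Q.set, ‖f x‖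

/-- The average `⟨f⟩_Q` of `f` over a cube. -/
def avg {n : ℕ} (Q : Cube n) (f : E n → ℂ) : ℂ := (Q.vol : ℂ)⁻¹ * ∫ x in Q.set, f x

/-- The `L^p` norm (`p` a real exponent) of `f : ℝⁿ → ℂ`. -/
def lpNorm {n : ℕ} (f : E n → ℂ) (p : ℝ) : ℝ := (eLpNorm f (ENNReal.ofReal p) volume).toReal

/-- `f` is bounded, measurable and compactly supported. -/
def BddCompactSupp {n : ℕ} (f : E n → ℂ) : Prop :=
  Measurable f ∧ HasCompactSupport f ∧ ∃ M : ℝ, ∀ x, ‖f x‖ ≤ M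

/-- The pairing `⟨f, g⟩ = ∫ f g`. -/
def pairing {n : ℕ} (f g : E n → ℂ) : ℂ := ∫ x, f x * g x

/-! ### Random dyadic grids -/

/-- The translation `Σ_{j : 2^{-j} < 2^{-k}} 2^{-j} ω^j` of the grid of scale `2^{-k}`. -/
def gridShift {n : ℕ} (ω : ℤ → Fin n → Bool) (k : ℤ) (i : Fin n) : ℝ :=
  ∑' j : {j : ℤ // k < j}, (2 : ℝ) ^ (-(j.1)) * (if ω j.1 i then 1 else 0)

/-- The shifted dyadic grid `𝒟_ω = {I + ω : I ∈ 𝒟₀}`. -/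
def dyadicGrid {n : ℕ} (ω : ℤ → Fin n → Bool) : Set (Cube n) :=
  {Q | ∃ (k : ℤ) (m : Fin n → ℤ), Q.side = (2 : ℝ) ^ (-k) ∧
    ∀ i, Q.corner i = (m i : ℝ) * (2 : ℝ) ^ (-k) + gridShift ω k i}

/-- A dyadic grid is a translate-type grid `𝒟_ω` of the standard grid. -/
def IsDyadicGrid {n : ℕ} (𝒟 : Set (Cube n)) : Prop := ∃ ω, 𝒟 = dyadicGrid ω

/-- A grid has no quadrants if every strictly increasing chain of cubes exhausts `ℝⁿ`;
equivalently, every cube of the grid and every point are contained in a common bigger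
grid cube. -/
def NoQuadrants {n : ℕ} (𝒟 : Set (Cube n)) : Prop :=
  ∀ Q ∈ 𝒟, ∀ x : E n, ∃ R ∈ 𝒟, Q.set ⊆ R.set ∧ x ∈ R.set

/-- A cube `I` of a grid `𝒟` is good (with parameters `r, γ`) if for every `J ∈ 𝒟` with
`ℓ(J) ≥ 2^r ℓ(I)` one has `d(I, ∂J) > ℓ(I)^γ ℓ(J)^(1-γ)`. -/
def IsGood {n : ℕ} (𝒟 : Set (Cube n)) (r : ℕ) (γ : ℝ) (I : Cube n) : Prop :=
  ∀ J ∈ 𝒟, (2 : ℝ) ^ r * I.side ≤ J.side →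
    I.side ^ γ * J.side ^ (1 - γ) < setDist I.clSet (frontier J.set)

/-! ### Haar functions -/

/-- One-dimensional Haar functions on the interval `[a, a+l)`:
noncancellative (`e = false`) and cancellative (`e = true`). -/
def haar1 (a l : ℝ) (e : Bool) (t : ℝ) : ℝ :=
  if a ≤ t ∧ t < a + l then
    if e then (if t < a + l / 2 then l ^ (-(1 : ℝ) / 2) else -(l ^ (-(1 : ℝ) / 2)))
    else l ^ (-(1 : ℝ) / 2)
  else 0

/-- The Haar function `h_Q^η` of a cube `Q ⊂ ℝⁿ`. It is cancellative iff `η ≠ 0`. -/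
def haar {n : ℕ} (Q : Cube n) (η : Fin n → Bool) : E n → ℝ :=
  fun x => ∏ i, haar1 (Q.corner i) Q.side (η i) (x i)

/-- The pairing `⟨f, h_Q^η⟩`. -/
def haarPairing {n : ℕ} (f : E n → ℂ) (Q : Cube n) (η : Fin n → Bool) : ℂ :=
  ∫ x, f x * (haar Q η x : ℂ)

/-! ### Bilinear Calderón–Zygmund kernels and truncated operators -/


/-- `K` is a (measurable) standard bilinear Calderón–Zygmund kernel on `ℝⁿ` with Hölder
exponent `α` and constant `C`: size bound and Hölder bounds in each of the three
variables, away from the diagonal `Δ = {x = y = z}`. -/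
def CZBounds (n : ℕ) (α : ℝ) (K : E n → E n → E n → ℂ) (C : ℝ) : Prop :=
  Measurable (fun p : E n × E n × E n => K p.1 p.2.1 p.2.2) ∧
  (∀ x y z : E n, ¬(x = y ∧ y = z) →
    ‖K x y z‖ ≤ C / (dist x y + dist x z) ^ (2 * n)) ∧
  (∀ x x' y z : E n, ¬(x = y ∧ y = z) → ¬(x' = y ∧ y = z) →
    dist x x' ≤ max (dist x y) (dist x z) / 2 →
    ‖K x y z - K x' y z‖ ≤ C * dist x x' ^ α / (dist x y + dist x z) ^ (2 * (n : ℝ) + α)) ∧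
  (∀ x y y' z : E n, ¬(x = y ∧ y = z) → ¬(x = y' ∧ y' = z) →
    dist y y' ≤ max (dist x y) (dist x z) / 2 →
    ‖K x y z - K x y' z‖ ≤ C * dist y y' ^ α / (dist x y + dist x z) ^ (2 * (n : ℝ) + α)) ∧
  (∀ x y z z' : E n, ¬(x = y ∧ y = z) → ¬(x = y ∧ y = z') →
    dist z z' ≤ max (dist x y) (dist x z) / 2 →
    ‖K x y z - K x y z'‖ ≤ C * dist z z' ^ α / (dist x y + dist x z) ^ (2 * (n : ℝ) + α))

/-- The truncated bilinear singular integral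
`T_ε(f,g)(x) = ∬_{max(|x-y|,|x-z|) > ε} K(x,y,z) f(y) g(z) dy dz`. -/
def truncT {n : ℕ} (K : E n → E n → E n → ℂ) (ε : ℝ) (f g : E n → ℂ) (x : E n) : ℂ :=
  ∫ y, ∫ z, if ε < max (dist x y) (dist x z) then K x y z * f y * g z else 0

/-- The class `𝒜` of smooth truncation profiles: smooth `φ` with values in `[0,1]`,
vanishing on `[0,1/2]`, equal to `1` on `[1,∞)`, and `‖φ'‖_∞ ≤ 10`. -/
def memA (φ : ℝ → ℝ) : Prop :=
  ContDiff ℝ (⊤ : ℕ∞) φ ∧ (∀ t, φ t ∈ Set.Icc (0 : ℝ) 1) ∧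
    (∀ t ≤ (1 : ℝ) / 2, φ t = 0) ∧ (∀ t, (1 : ℝ) ≤ t → φ t = 1) ∧ ∀ t, |deriv φ t| ≤ 10

/-- The smoothly truncated kernel `K_ε^φ(x,y,z) = K(x,y,z) φ((|x-y|+|x-z|)/ε)`. -/
def smoothK {n : ℕ} (K : E n → E n → E n → ℂ) (φ : ℝ → ℝ) (ε : ℝ) :
    E n → E n → E n → ℂ :=
  fun x y z => K x y z * ((φ ((dist x y + dist x z) / ε) : ℝ) : ℂ)

/-- The smoothly truncated operator `T_ε^φ(f,g)(x) = ∬ K_ε^φ(x,y,z) f(y) g(z) dy dz`. -/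
def smoothT {n : ℕ} (K : E n → E n → E n → ℂ) (φ : ℝ → ℝ) (ε : ℝ) (f g : E n → ℂ)
    (x : E n) : ℂ :=
  ∫ y, ∫ z, smoothK K φ ε x y z * f y * g z

/-- The first adjoint kernel, `K^{1*}(x,y,z) = K(y,x,z)`. -/
def adj1 {n : ℕ} (K : E n → E n → E n → ℂ) : E n → E n → E n → ℂ := fun x y z => K y x z

/-- The second adjoint kernel, `K^{2*}(x,y,z) = K(z,y,x)`. -/
def adj2 {n : ℕ} (K : E n → E n → E n → ℂ) : E n → E n → E n → ℂ := fun x y z => K z y x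

/-- `C` is a weak boundedness constant of the bilinear operator `T`:
`|⟨T(1_I,1_I), 1_I⟩| ≤ C |I|` for all cubes `I ⊂ ℝⁿ`. -/
def WBPBound {n : ℕ} (T : (E n → ℂ) → (E n → ℂ) → E n → ℂ) (C : ℝ) : Prop :=
  ∀ Q : Cube n, ‖∫ x in Q.set, T (indC Q) (indC Q) x‖ ≤ C * Q.vol

/-! ### The `BMO` pairings `⟨T_ε(1,1), φ₀⟩` and testing conditions -/

/-- The pairing `⟨T_ε(1,1), φ₀⟩`, defined (for `φ₀` supported in the cube `R`, with mean
zero, and `c ≥ 3` a dilation factor) as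
`⟨T_ε(1_{cR},1_{cR}), φ₀⟩ + ∭ (K(x,y,z) - K(c_R,y,z)) 1_{(cR×cR)ᶜ}(y,z) φ₀(x) dy dz dx`. -/
def bmoPairing {n : ℕ} (K : E n → E n → E n → ℂ) (ε : ℝ) (φ₀ : E n → ℂ) (R : Cube n)
    (c : ℝ) : ℂ :=
  (∫ x, truncT K ε (indC (R.dilate c)) (indC (R.dilate c)) x * φ₀ x) +
    ∫ x, φ₀ x * ∫ y, ∫ z,
      if y ∈ (R.dilate c).set ∧ z ∈ (R.dilate c).set then 0
      else K x y z - K R.center y z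

/-- The pairing `⟨T_ε^{1*}(1,1), φ₀⟩ = ⟨T_ε(φ₀, 1_{cR}), 1_{cR}⟩ + (correction with K^{1*})`. -/
def bmoPairing1 {n : ℕ} (K : E n → E n → E n → ℂ) (ε : ℝ) (φ₀ : E n → ℂ) (R : Cube n)
    (c : ℝ) : ℂ :=
  (∫ x, truncT K ε φ₀ (indC (R.dilate c)) x * indC (R.dilate c) x) +
    ∫ x, φ₀ x * ∫ y, ∫ z,
      if y ∈ (R.dilate c).set ∧ z ∈ (R.dilate c).set then 0
      else adj1 K x y z - adj1 K R.center y z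

/-- The pairing `⟨T_ε^{2*}(1,1), φ₀⟩ = ⟨T_ε(1_{cR}, φ₀), 1_{cR}⟩ + (correction with K^{2*})`. -/
def bmoPairing2 {n : ℕ} (K : E n → E n → E n → ℂ) (ε : ℝ) (φ₀ : E n → ℂ) (R : Cube n)
    (c : ℝ) : ℂ :=
  (∫ x, truncT K ε (indC (R.dilate c)) φ₀ x * indC (R.dilate c) x) +
    ∫ x, φ₀ x * ∫ y, ∫ z,
      if y ∈ (R.dilate c).set ∧ z ∈ (R.dilate c).set then 0
      else adj2 K x y z - adj2 K R.center y z

/-- `B` is an admissible `BMO` bound for `T_ε(1,1)`: `|⟨T_ε(1,1), φ₀⟩| ≤ B |R|`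
over all admissible testing data. -/
def BMOBound {n : ℕ} (K : E n → E n → E n → ℂ) (ε : ℝ) (B : ℝ) : Prop :=
  ∀ (R : Cube n) (φ₀ : E n → ℂ), Measurable φ₀ → Function.support φ₀ ⊆ R.clSet →
    (∀ x, ‖φ₀ x‖ ≤ 1) → (∫ x, φ₀ x) = 0 →
    ∀ c : ℝ, 3 ≤ c → ε < 2⁻¹ * (c - 1) * R.side →
      ‖bmoPairing K ε φ₀ R c‖ ≤ B * R.vol

/-- `B` is an admissible `BMO` bound for `T_ε^{1*}(1,1)`. -/
def BMOBound1 {n : ℕ} (K : E n → E n → E n → ℂ) (ε : ℝ) (B : ℝ) : Prop :=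
  ∀ (R : Cube n) (φ₀ : E n → ℂ), Measurable φ₀ → Function.support φ₀ ⊆ R.clSet →
    (∀ x, ‖φ₀ x‖ ≤ 1) → (∫ x, φ₀ x) = 0 →
    ∀ c : ℝ, 3 ≤ c → ε < 2⁻¹ * (c - 1) * R.side →
      ‖bmoPairing1 K ε φ₀ R c‖ ≤ B * R.vol

/-- `B` is an admissible `BMO` bound for `T_ε^{2*}(1,1)`. -/
def BMOBound2 {n : ℕ} (K : E n → E n → E n → ℂ) (ε : ℝ) (B : ℝ) : Prop :=
  ∀ (R : Cube n) (φ₀ : E n → ℂ), Measurable φ₀ → Function.support φ₀ ⊆ R.clSet →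
    (∀ x, ‖φ₀ x‖ ≤ 1) → (∫ x, φ₀ x) = 0 →
    ∀ c : ℝ, 3 ≤ c → ε < 2⁻¹ * (c - 1) * R.side →
      ‖bmoPairing2 K ε φ₀ R c‖ ≤ B * R.vol

/-! ### Sparse collections -/

/-- A collection `𝒮` of cubes is `η`-sparse: every `Q ∈ 𝒮` carries a major measurable
subset `E_Q ⊆ Q` with `|E_Q| > η |Q|`, the sets `E_Q` being pairwise disjoint. -/
def IsSparse {n : ℕ} (η : ℝ) (𝒮 : Set (Cube n)) : Prop :=
  ∃ Esel : Cube n → Set (E n),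
    (∀ Q ∈ 𝒮, MeasurableSet (Esel Q) ∧ Esel Q ⊆ Q.set ∧
      ENNReal.ofReal (η * Q.vol) < MeasureTheory.volume (Esel Q)) ∧
    𝒮.Pairwise fun Q R => Disjoint (Esel Q) (Esel R)

/-- The sparse form `Λ_𝒮(f₁,f₂,f₃) = Σ_{Q ∈ 𝒮} |Q| ⟨|f₁|⟩_Q ⟨|f₂|⟩_Q ⟨|f₃|⟩_Q`. -/
def sparseForm {n : ℕ} (𝒮 : Set (Cube n)) (f₁ f₂ f₃ : E n → ℂ) : ℝ :=
  ∑' Q : 𝒮, (Q : Cube n).vol * avgAbs Q f₁ * avgAbs Q f₂ * avgAbs Q f₃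

/-! ### Bilinear dyadic shifts and paraproducts, as trilinear forms -/

/-- A trilinear form on functions on `ℝⁿ`. -/
abbrev TriForm (n : ℕ) : Type := (E n → ℂ) → (E n → ℂ) → (E n → ℂ) → ℂ

/-- The index set of a bilinear dyadic shift of complexity `(i,j,k)` in the grid `𝒟`:
tuples of cubes `I, J, K ⊆ Q` of `𝒟` with `ℓ(I) = 2^{-i} ℓ(Q)`, `ℓ(J) = 2^{-j} ℓ(Q)`,
`ℓ(K) = 2^{-k} ℓ(Q)`, together with Haar signatures, `h_K` being cancellative and at most
one of `h_I, h_J` being noncancellative. -/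
structure ShiftIndex (n : ℕ) (𝒟 : Set (Cube n)) (i j k : ℕ) where
  Q : Cube n
  I : Cube n
  J : Cube n
  K : Cube n
  ηf : Fin n → Bool
  ηg : Fin n → Bool
  ηh : Fin n → Bool
  memQ : Q ∈ 𝒟
  memI : I ∈ 𝒟
  memJ : J ∈ 𝒟
  memK : K ∈ 𝒟
  subI : I.set ⊆ Q.set
  subJ : J.set ⊆ Q.set
  subK : K.set ⊆ Q.set
  sideI : I.side = Q.side / 2 ^ i
  sideJ : J.side = Q.side / 2 ^ j
  sideK : K.side = Q.side / 2 ^ k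
  cancel_h : ηh ≠ fun _ => false
  cancel_fg : ¬(ηf = (fun _ => false) ∧ ηg = (fun _ => false))

/-- `Λ` is (the trilinear form of) a cancellative bilinear dyadic shift of complexity
`(i,j,k)` in the grid `𝒟`: `Λ(f,g,h) = Σ α_{I,J,K,Q} ⟨f, h̃_I⟩ ⟨g, h̃_J⟩ ⟨h, h_K⟩`
with `|α_{I,J,K,Q}| ≤ |I|^{1/2} |J|^{1/2} |K|^{1/2} / |Q|²`. -/
def IsShiftForm {n : ℕ} (𝒟 : Set (Cube n)) (i j k : ℕ) (Λ : TriForm n) : Prop :=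
  ∃ α : ShiftIndex n 𝒟 i j k → ℂ,
    (∀ t, ‖α t‖ ≤ Real.sqrt (t.I.vol * t.J.vol * t.K.vol) / t.Q.vol ^ 2) ∧
    ∀ f g h, Λ f g h =
      ∑' t : ShiftIndex n 𝒟 i j k,
        α t * haarPairing f t.I t.ηf * haarPairing g t.J t.ηg * haarPairing h t.K t.ηh

/-- `Λ` is a cancellative bilinear shift of complexity `(i,i,k)` or `(i,i+1,k)` in `𝒟`,
or an adjoint (`⟨S^{1*}(f,g),h⟩ = ⟨S(h,g),f⟩`, `⟨S^{2*}(f,g),h⟩ = ⟨S(f,h),g⟩`) of such. -/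
def IsExtShiftForm {n : ℕ} (𝒟 : Set (Cube n)) (i k : ℕ) (Λ : TriForm n) : Prop :=
  ∃ Λ₀ : TriForm n, (IsShiftForm 𝒟 i i k Λ₀ ∨ IsShiftForm 𝒟 i (i + 1) k Λ₀) ∧
    ((∀ f g h, Λ f g h = Λ₀ f g h) ∨ (∀ f g h, Λ f g h = Λ₀ h g f) ∨
      (∀ f g h, Λ f g h = Λ₀ f h g))

/-- The index set of a bilinear paraproduct in the grid `𝒟`: cubes `K ∈ 𝒟` with a
cancellative Haar signature. -/
structure ParaIndex (n : ℕ) (𝒟 : Set (Cube n)) where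
  K : Cube n
  η : Fin n → Bool
  mem : K ∈ 𝒟
  cancel : η ≠ fun _ => false

/-- `Λ` is (the trilinear form of) a bilinear paraproduct
`Π_β(f,g) = Σ_K β_K ⟨f⟩_K ⟨g⟩_K h_K` in the grid `𝒟`, with coefficients satisfying the
Carleson normalization `Σ_{K ⊆ K₀} |β_K|² ≤ |K₀|` for all `K₀ ∈ 𝒟`. -/
def IsParaForm {n : ℕ} (𝒟 : Set (Cube n)) (Λ : TriForm n) : Prop :=
  ∃ β : ParaIndex n 𝒟 → ℂ,
    (∀ K₀ ∈ 𝒟, (∑' t : {t : ParaIndex n 𝒟 // t.K.set ⊆ K₀.set},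
        ((‖β t.1‖₊ : ℝ≥0∞) ^ 2)) ≤ ENNReal.ofReal K₀.vol) ∧
    ∀ f g h, Λ f g h =
      ∑' t : ParaIndex n 𝒟, β t * avg t.K f * avg t.K g * haarPairing h t.K t.η

/-! The ancestor `Q = K^{(r)}` of a good cube `K` is a grid cube of side `2^r ℓ(K)`, so
goodness keeps `K` at distance more than `ℓ(K)^γ ℓ(Q)^(1-γ)` from `∂Q`. A grid cube `P` with
`ℓ(P) ≤ ℓ(Q)` is either inside `Q` or disjoint from it, and in the latter case it is at least
as far from `K` as `∂Q` is. Since `ℓ(J) < ℓ(I) ≤ ℓ(Q)`, the assumed bound on `d(K,I)` and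
`d(K,J)` rules out the second alternative for `I` and `J`. -/

lemma exists_mem_frontier_mem_segment {V : Type*} [NormedAddCommGroup V] [NormedSpace ℝ V]
    {s : Set V} {x y : V} (hx : x ∈ closure s) (hy : y ∉ interior s) :
    ∃ w ∈ frontier s, w ∈ segment ℝ x y := by
  by_contra! h
  have hcover : segment ℝ x y ⊆ interior s ∪ (closure s)ᶜ := fun z hz => by
    by_cases hzs : z ∈ closure s
    · exact Or.inl (by_contra fun hzi => h z ⟨hzs, hzi⟩ hz)
    · exact Or.inr hzs
  rcases (convex_segment x y).isPreconnected.subset_or_subset isOpen_interior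
      isClosed_closure.isOpen_compl
      (disjoint_compl_right.mono_left interior_subset_closure) hcover with hint | hext
  · exact hy (hint (right_mem_segment ℝ x y))
  · exact hext (left_mem_segment ℝ x y) hx

lemma exists_mem_frontier_dist_le {V : Type*} [NormedAddCommGroup V] [NormedSpace ℝ V]
    {s : Set V} {x y : V} (hx : x ∈ closure s) (hy : y ∉ interior s) :
    ∃ w ∈ frontier s, dist x w ≤ dist x y := by
  obtain ⟨w, hw, hseg⟩ := exists_mem_frontier_mem_segment hx hy
  exact ⟨w, hw, by linarith [dist_add_dist_of_mem_segment hseg, dist_nonneg (x := w) (y := y)]⟩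

section

variable {n : ℕ}

lemma setDist_le {s t : Set (E n)} {x y : E n} (hx : x ∈ s) (hy : y ∈ t) :
    setDist s t ≤ dist x y :=
  csInf_le ⟨0, by rintro _ ⟨a, -, b, -, rfl⟩; exact dist_nonneg⟩ ⟨x, hx, y, hy, rfl⟩

lemma le_setDist {s t : Set (E n)} (hs : s.Nonempty) (ht : t.Nonempty) {c : ℝ}
    (h : ∀ x ∈ s, ∀ y ∈ t, c ≤ dist x y) : c ≤ setDist s t :=
  le_csInf (hs.image2 ht) (by rintro _ ⟨a, ha, b, hb, rfl⟩; exact h a ha b hb)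

namespace Cube

lemma set_eq_pi (Q : Cube n) :
    Q.set = univ.pi fun i => Ico (Q.corner i) (Q.corner i + Q.side) := by
  ext x
  simp [Cube.set]

lemma closure_set (Q : Cube n) : closure Q.set = Q.clSet := by
  rw [set_eq_pi, closure_pi_set]
  ext x
  simp only [closure_Ico (ne_of_lt (lt_add_of_pos_right _ Q.side_pos)), mem_pi, mem_univ,
    mem_Icc, true_implies, Cube.clSet, mem_ofPred_eq]

lemma corner_mem_clSet (Q : Cube n) : Q.corner ∈ Q.clSet := fun _ =>
  ⟨le_rfl, le_add_of_nonneg_right Q.side_pos.le⟩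

lemma setDist_frontier_le_cubeDist {K P Q : Cube n} (hKQ : K.set ⊆ Q.set)
    (hPQ : Disjoint P.set Q.set) : setDist K.clSet (frontier Q.set) ≤ cubeDist K P := by
  refine le_setDist ⟨_, K.corner_mem_clSet⟩ ⟨_, P.corner_mem_clSet⟩ fun x hx y hy => ?_
  have hxQ : x ∈ closure Q.set := closure_mono hKQ (K.closure_set ▸ hx)
  have hyQ : y ∉ interior Q.set := Set.disjoint_left.mp
    ((hPQ.mono_right interior_subset).closure_left isOpen_interior) (P.closure_set ▸ hy)
  obtain ⟨w, hw, hdist⟩ := exists_mem_frontier_dist_le hxQ hyQ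
  exact (setDist_le hx hw).trans hdist

end Cube

lemma gridShift_eq_tsum_nat (ω : ℤ → Fin n → Bool) (k : ℤ) (i : Fin n) :
    gridShift ω k i =
      ∑' m : ℕ, (2 : ℝ) ^ (-(k + 1 + m)) * (if ω (k + 1 + m) i then 1 else 0) := by
  let e : ℕ ≃ {j : ℤ // k < j} :=
    { toFun := fun m => ⟨k + 1 + m, by omega⟩
      invFun := fun j => (j.1 - (k + 1)).toNat
      left_inv := fun m => by simp
      right_inv := fun j => Subtype.ext (by have := j.2; simp only; omega) }
  exact (e.tsum_eq fun j => (2 : ℝ) ^ (-j.1) * (if ω j.1 i then 1 else 0)).symm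

lemma summable_gridShift_nat (ω : ℤ → Fin n → Bool) (k : ℤ) (i : Fin n) :
    Summable fun m : ℕ => (2 : ℝ) ^ (-(k + 1 + m)) * (if ω (k + 1 + m) i then 1 else 0) := by
  refine Summable.of_nonneg_of_le (fun m => by positivity) (fun m => ?_)
    ((summable_geometric_two).mul_left ((2 : ℝ) ^ (-(k + 1))))
  have hpow : (2 : ℝ) ^ (-(k + 1 + (m : ℤ))) = (2 : ℝ) ^ (-(k + 1)) * (1 / 2) ^ m := by
    rw [neg_add, zpow_add₀ two_ne_zero, zpow_neg (2 : ℝ) (m : ℤ), zpow_natCast, one_div, inv_pow]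
  rw [hpow]
  split_ifs
  · rw [mul_one]
  · rw [mul_zero]
    positivity

lemma exists_gridShift_eq_add_mul (ω : ℤ → Fin n → Bool) (l : ℤ) (N : ℕ) (i : Fin n) :
    ∃ D : ℤ, gridShift ω l i = gridShift ω (l + N) i + D * (2 : ℝ) ^ (-(l + N)) := by
  -- `D` collects the binary digits of the shift at the levels `l + 1, …, l + N`
  refine ⟨∑ m ∈ Finset.range N, if ω (l + 1 + m) i then 2 ^ (N - 1 - m) else 0, ?_⟩
  rw [gridShift_eq_tsum_nat, gridShift_eq_tsum_nat,
    ← (summable_gridShift_nat ω l i).sum_add_tsum_nat_add N, add_comm]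
  congr 1
  · refine tsum_congr fun m => ?_
    rw [show l + 1 + ((m + N : ℕ) : ℤ) = l + N + 1 + m by push_cast; ring]
  · rw [Int.cast_sum, Finset.sum_mul]
    refine Finset.sum_congr rfl fun m hm => ?_
    have hpow : (2 : ℝ) ^ (-(l + 1 + (m : ℤ))) = 2 ^ (N - 1 - m) * (2 : ℝ) ^ (-(l + N)) := by
      rw [← zpow_natCast, ← zpow_add₀ two_ne_zero]
      have := Finset.mem_range.mp hm
      congr 1
      omega
    rw [hpow]
    split_ifs <;> push_cast <;> ring

lemma Ico_subset_Ico_of_sub_eq_intCast_mul {u a b : ℝ} (hu : 0 < u) {N : ℕ} {t : ℤ}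
    (hab : a = b + t * u) (h : (Ico a (a + u) ∩ Ico b (b + N * u)).Nonempty) :
    Ico a (a + u) ⊆ Ico b (b + N * u) := by
  obtain ⟨x, ⟨hax, hxa⟩, ⟨hbx, hxb⟩⟩ := h
  have ht0 : (0 : ℝ) ≤ t := by
    have : (-1 : ℝ) < t := by nlinarith
    exact_mod_cast (show (-1 : ℤ) < t by exact_mod_cast this)
  have htN : (t : ℝ) + 1 ≤ N := by
    have : (t : ℝ) < N := by nlinarith
    exact_mod_cast (show t + 1 ≤ N by exact_mod_cast this)
  exact Ico_subset_Ico (by nlinarith) (by nlinarith)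

namespace dyadicGrid

lemma exists_mem_side_eq (ω : ℤ → Fin n → Bool) (l : ℤ) (x : E n) :
    ∃ R ∈ dyadicGrid ω, R.side = (2 : ℝ) ^ (-l) ∧ x ∈ R.set := by
  have hu : (0 : ℝ) < (2 : ℝ) ^ (-l) := by positivity
  let m : Fin n → ℤ := fun i => ⌊(x i - gridShift ω l i) / (2 : ℝ) ^ (-l)⌋
  refine ⟨⟨fun i => m i * (2 : ℝ) ^ (-l) + gridShift ω l i, _, hu⟩, ⟨l, m, rfl, fun i => rfl⟩,
    rfl, fun i => ⟨?_, ?_⟩⟩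
  · have := (le_div_iff₀ hu).mp (Int.floor_le ((x i - gridShift ω l i) / (2 : ℝ) ^ (-l)))
    dsimp only
    linarith
  · have := (div_lt_iff₀ hu).mp (Int.lt_floor_add_one ((x i - gridShift ω l i) / (2 : ℝ) ^ (-l)))
    dsimp only
    linarith

variable {ω : ℤ → Fin n → Bool}

lemma set_subset_of_not_disjoint {P R : Cube n} (hP : P ∈ dyadicGrid ω) (hR : R ∈ dyadicGrid ω)
    (hside : P.side ≤ R.side) (h : ¬Disjoint P.set R.set) : P.set ⊆ R.set := by
  obtain ⟨k, m, hk, hm⟩ := hP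
  obtain ⟨l, m', hl, hm'⟩ := hR
  have hlk : l ≤ k := by
    rw [hk, hl, zpow_le_zpow_iff_right₀ one_lt_two] at hside
    omega
  obtain ⟨N, rfl⟩ := Int.le.dest hlk
  have hRside : R.side = ((2 ^ N : ℕ) : ℝ) * P.side := by
    rw [hl, hk, neg_add, zpow_add₀ two_ne_zero, zpow_neg (2 : ℝ) (N : ℤ), zpow_natCast]
    push_cast
    field_simp
  obtain ⟨x, hxP, hxR⟩ := not_disjoint_iff.mp h
  rw [P.set_eq_pi] at hxP ⊢
  rw [R.set_eq_pi, hRside] at hxR ⊢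
  refine pi_mono fun i _ => ?_
  obtain ⟨D, hD⟩ := exists_gridShift_eq_add_mul ω l N i
  refine Ico_subset_Ico_of_sub_eq_intCast_mul P.side_pos (t := m i - m' i * 2 ^ N - D) ?_
    ⟨x i, hxP i trivial, hxR i trivial⟩
  rw [hm, hm', hD, hk, neg_add, zpow_add₀ two_ne_zero, zpow_neg (2 : ℝ) (N : ℤ),
    zpow_natCast]
  push_cast
  field_simp
  ring

lemma exists_ancestor {K : Cube n} (hK : K ∈ dyadicGrid ω) (r : ℕ) :
    ∃ Q ∈ dyadicGrid ω, K.set ⊆ Q.set ∧ Q.side = 2 ^ r * K.side := by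
  obtain ⟨k, -, hk, -⟩ := id hK
  obtain ⟨Q, hQ, hQside, hcorner⟩ := exists_mem_side_eq ω (k - r) K.corner
  have hside : Q.side = 2 ^ r * K.side := by
    rw [hQside, hk, ← zpow_natCast, ← zpow_add₀ two_ne_zero]
    ring_nf
  refine ⟨Q, hQ, set_subset_of_not_disjoint hK hQ ?_ ?_, hside⟩
  · rw [hside]
    exact le_mul_of_one_le_left K.side_pos.le (one_le_pow₀ one_le_two)
  · exact not_disjoint_iff.mpr ⟨K.corner, fun i => ⟨le_rfl, lt_add_of_pos_right _ K.side_pos⟩,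
      hcorner⟩

end dyadicGrid

lemma IsGood.set_subset_of_cubeDist_le {ω : ℤ → Fin n → Bool} {r : ℕ} {γ : ℝ} {K P Q : Cube n}
    (hgood : IsGood (dyadicGrid ω) r γ K) (hP : P ∈ dyadicGrid ω) (hQ : Q ∈ dyadicGrid ω)
    (hKQ : K.set ⊆ Q.set) (hQside : 2 ^ r * K.side ≤ Q.side) (hPside : P.side ≤ Q.side)
    (hdist : cubeDist K P ≤ K.side ^ γ * Q.side ^ (1 - γ)) : P.set ⊆ Q.set :=
  dyadicGrid.set_subset_of_not_disjoint hP hQ hPside fun hPQ =>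
    (hgood Q hQ hQside).not_ge (hdist.trans' (Cube.setDist_frontier_le_cubeDist hKQ hPQ))

end

theorem diagonal_part_common_parent_general (n : ℕ) (α : ℝ)
    (hα : α ∈ Set.Ioc (0 : ℝ) 1) (r : ℕ)
    (ω : ℤ → Fin n → Bool) (I J K : Cube n)
    (hI : I ∈ dyadicGrid ω) (hJ : J ∈ dyadicGrid ω) (hK : K ∈ dyadicGrid ω)
    (hgood : IsGood (dyadicGrid ω) r (α / (2 * (2 * (n : ℝ) + α))) K)
    (h2 : I.side = 2 * J.side) (h2' : I.side ≤ 2 ^ r * K.side)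
    (h3 : max (cubeDist K I) (cubeDist K J) ≤
      K.side ^ (α / (2 * (2 * (n : ℝ) + α))) *
        J.side ^ (1 - α / (2 * (2 * (n : ℝ) + α)))) :
    ∃ Q ∈ dyadicGrid ω, K.set ⊆ Q.set ∧ Q.side = 2 ^ r * K.side ∧
      I.set ∪ J.set ∪ K.set ⊆ Q.set := by
  set γ := α / (2 * (2 * (n : ℝ) + α))
  have hγ : γ ≤ 1 := by
    have hn : (0 : ℝ) ≤ n := Nat.cast_nonneg n
    rw [div_le_one (by linarith [hα.1])]
    linarith [hα.1]
  obtain ⟨Q, hQ, hKQ, hQside⟩ := dyadicGrid.exists_ancestor hK r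
  have hIQ : I.side ≤ Q.side := hQside ▸ h2'
  have hJQ : J.side ≤ Q.side := by linarith [J.side_pos]
  have hJdist : K.side ^ γ * J.side ^ (1 - γ) ≤ K.side ^ γ * Q.side ^ (1 - γ) :=
    mul_le_mul_of_nonneg_left (Real.rpow_le_rpow J.side_pos.le hJQ (by linarith))
      (Real.rpow_nonneg K.side_pos.le γ)
  have hsub : ∀ P ∈ dyadicGrid ω, P.side ≤ Q.side →
      cubeDist K P ≤ K.side ^ γ * J.side ^ (1 - γ) → P.set ⊆ Q.set := fun P hP hPQ hdist =>
    hgood.set_subset_of_cubeDist_le hP hQ hKQ hQside.ge hPQ (hdist.trans hJdist)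
  exact ⟨Q, hQ, hKQ, hQside, union_subset (union_subset
    (hsub I hI hIQ (le_of_max_le_left h3)) (hsub J hJ hJQ (le_of_max_le_right h3))) hKQ⟩

/-- the `r`-th ancestor works as a common parent in the diagonal part:
if `K` is good, `ℓ(K) ≤ ℓ(I) = 2ℓ(J) ≤ 2^r ℓ(K)` and
`max(d(K,I), d(K,J)) ≤ ℓ(K)^γ ℓ(J)^(1-γ)` with `γ = α/(2(2n+α))`, then the `r`-th dyadic
ancestor `Q = K^{(r)}` (the grid cube containing `K` with `ℓ(Q) = 2^r ℓ(K)`) contains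
`I ∪ J ∪ K`. -/
theorem diagonal_part_common_parent (n : ℕ) (hn : 0 < n) (α : ℝ)
    (hα : α ∈ Set.Ioc (0 : ℝ) 1) (r : ℕ) (hr : 1 ≤ r)
    (ω : ℤ → Fin n → Bool) (I J K : Cube n)
    (hI : I ∈ dyadicGrid ω) (hJ : J ∈ dyadicGrid ω) (hK : K ∈ dyadicGrid ω)
    (hgood : IsGood (dyadicGrid ω) r (α / (2 * (2 * (n : ℝ) + α))) K)
    (h1 : K.side ≤ I.side) (h2 : I.side = 2 * J.side) (h2' : I.side ≤ 2 ^ r * K.side)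
    (h3 : max (cubeDist K I) (cubeDist K J) ≤
      K.side ^ (α / (2 * (2 * (n : ℝ) + α))) *
        J.side ^ (1 - α / (2 * (2 * (n : ℝ) + α)))) :
    ∃ Q ∈ dyadicGrid ω, K.set ⊆ Q.set ∧ Q.side = 2 ^ r * K.side ∧
      I.set ∪ J.set ∪ K.set ⊆ Q.set :=
  diagonal_part_common_parent_general n α hα r ω I J K hI hJ hK hgood h2 h2' h3

end Bilinear
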